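/- Let N, m be integers with N ≥ 2m ≥ 0 and N ≥ 1, and set K := max(⌊(2N−3m−1)/2⌋, 0). Then there exist rational numbers s_0, s_1, …, s_K such that Δ_{N,m}(X) = (2X−1) · Σ_{i=0}^{K} s_i (X(X−1))^i in ℚ[X]; moreover, if (N,m) ≠ (2,1) then one may take s_0 = 0. -/

import Mathlib

/-!
Write `ι(X) = 1 - X`. Since `σ(j + 1) = (1 + j t) σ(j)` as generating series and `Q(j)` is the
inverse series of `σ(j)`, the values of `σ` and `Q` give the shift recursions
`p_{n+1}(X + 1) = p_{n+1} + X p_n` and `r_{n+1} = r_{n+1}(X + 1) + X r_n(X + 1)`. Reflecting the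
first through `ι` produces the second, whose solutions are determined by their values at `1`;
hence `r_n = (-1)^n p_n ∘ ι`. Consequently `Δ_{N,m} = F - F ∘ ι` with `F = binom(X, m) r_{N-2m}`,
so `Δ` is anti-invariant under `ι`: it vanishes at `1/2`, and `Δ / (2X - 1)` is `ι`-invariant,
hence a polynomial in `X(X - 1)`, of degree below `deg F ≤ 2N - 3m`. Finally `s_0 = Δ(1)`, which
the values of `σ` and `Q` at `1` make zero unless `(N, m) = (2, 1)`.
-/

/-- `σ_i(j) = Σ_{1 ≤ n_1 < ⋯ < n_i ≤ j-1} n_1 ⋯ n_i`, with `σ_0(j) = 1`. -/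
def sigmaP (i j : ℕ) : ℚ :=
  ∑ t ∈ (Finset.Icc 1 (j - 1)).powersetCard i, ∏ m ∈ t, (m : ℚ)

/-- `Q_0(j) = 1` and `Q_k(j) = -Σ_{i=1}^{k} σ_i(j) Q_{k-i}(j)` for `k ≥ 1`. -/
def QP (j : ℕ) : ℕ → ℚ
  | 0 => 1
  | k + 1 => -∑ i : Fin (k + 1), sigmaP (i + 1) j * QP j (k - i)
  termination_by k => k
  decreasing_by omega

/-- The generalized binomial coefficient `binom(X, m) = X(X-1)⋯(X-m+1)/m!` as a
polynomial in `ℚ[X]`. -/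
noncomputable def pbinom (m : ℕ) : Polynomial ℚ :=
  Polynomial.C ((m.factorial : ℚ))⁻¹ *
    ∏ i ∈ Finset.range m, (Polynomial.X - Polynomial.C (i : ℚ))

open Polynomial

lemma sigmaP_zero_left (j : ℕ) : sigmaP 0 j = 1 := by
  simp [sigmaP]

lemma sigmaP_one_right {i : ℕ} (hi : i ≠ 0) : sigmaP i 1 = 0 := by
  rw [sigmaP, Finset.powersetCard_eq_empty.mpr (by simp; omega), Finset.sum_empty]

lemma sigmaP_succ_succ (n : ℕ) {j : ℕ} (hj : 1 ≤ j) :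
    sigmaP (n + 1) (j + 1) = sigmaP (n + 1) j + j * sigmaP n j := by
  have hj' : j ∉ Finset.Icc 1 (j - 1) := by simp; omega
  have hIcc : Finset.Icc 1 (j + 1 - 1) = insert j (Finset.Icc 1 (j - 1)) := by
    ext x; simp; omega
  rw [sigmaP, hIcc, Finset.powersetCard_succ_insert hj', Finset.sum_union, Finset.sum_image,
    sigmaP, sigmaP, Finset.mul_sum]
  · congr 1
    refine Finset.sum_congr rfl fun t ht => Finset.prod_insert fun hjt => hj' ?_
    exact (Finset.mem_powersetCard.mp ht).1 hjt
  · intro a ha b hb hab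
    have hja : j ∉ a := fun h => hj' ((Finset.mem_powersetCard.mp ha).1 h)
    have hjb : j ∉ b := fun h => hj' ((Finset.mem_powersetCard.mp hb).1 h)
    simpa [Finset.erase_insert hja, Finset.erase_insert hjb] using congrArg (·.erase j) hab
  · rw [Finset.disjoint_right]
    rintro _ ht ht'
    obtain ⟨a, -, rfl⟩ := Finset.mem_image.mp ht
    exact hj' ((Finset.mem_powersetCard.mp ht').1 (Finset.mem_insert_self j a))

lemma PowerSeries.coeff_succ_one_add_C_mul_X_mul {R : Type*} [CommSemiring R] (a : R)
    (φ : PowerSeries R) (k : ℕ) :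
    coeff (k + 1) ((1 + C a * X) * φ) = coeff (k + 1) φ + a * coeff k φ := by
  rw [add_mul, one_mul, map_add, mul_assoc, coeff_C_mul, coeff_succ_X_mul]

noncomputable def sigmaSeries (j : ℕ) : PowerSeries ℚ := PowerSeries.mk fun i => sigmaP i j

noncomputable def QSeries (j : ℕ) : PowerSeries ℚ := PowerSeries.mk (QP j)

lemma sigmaSeries_mul_QSeries (j : ℕ) : sigmaSeries j * QSeries j = 1 := by
  ext k
  rw [PowerSeries.coeff_mul, PowerSeries.coeff_one]
  cases k with
  | zero => simp [sigmaSeries, QSeries, sigmaP_zero_left, QP]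
  | succ k =>
    rw [Finset.Nat.sum_antidiagonal_succ, Finset.Nat.sum_antidiagonal_eq_sum_range_succ_mk]
    simp [sigmaSeries, QSeries, sigmaP_zero_left, QP, Fin.sum_univ_eq_sum_range
      (fun i => sigmaP (i + 1) j * QP j (k - i))]

lemma sigmaSeries_one : sigmaSeries 1 = 1 := by
  ext k
  rcases eq_or_ne k 0 with rfl | hk
  · simp [sigmaSeries, sigmaP_zero_left]
  · simp [sigmaSeries, sigmaP_one_right hk, PowerSeries.coeff_one, hk]

lemma sigmaSeries_succ {j : ℕ} (hj : 1 ≤ j) :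
    sigmaSeries (j + 1) = (1 + PowerSeries.C (j : ℚ) * PowerSeries.X) * sigmaSeries j := by
  ext k
  cases k with
  | zero => simp [sigmaSeries, sigmaP_zero_left]
  | succ k =>
    rw [PowerSeries.coeff_succ_one_add_C_mul_X_mul]
    simp [sigmaSeries, sigmaP_succ_succ k hj]

lemma QSeries_eq_mul_QSeries_succ {j : ℕ} (hj : 1 ≤ j) :
    QSeries j = (1 + PowerSeries.C (j : ℚ) * PowerSeries.X) * QSeries (j + 1) := by
  linear_combination (-QSeries j) * sigmaSeries_mul_QSeries (j + 1) +
    QSeries j * QSeries (j + 1) * sigmaSeries_succ hj +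
    (1 + PowerSeries.C (j : ℚ) * PowerSeries.X) * QSeries (j + 1) * sigmaSeries_mul_QSeries j

lemma QP_succ {j : ℕ} (hj : 1 ≤ j) (k : ℕ) :
    QP j (k + 1) = QP (j + 1) (k + 1) + j * QP (j + 1) k := by
  have h := congrArg (PowerSeries.coeff (k + 1)) (QSeries_eq_mul_QSeries_succ hj)
  simpa only [PowerSeries.coeff_succ_one_add_C_mul_X_mul, QSeries, PowerSeries.coeff_mk] using h

lemma QP_one_left {k : ℕ} (hk : k ≠ 0) : QP 1 k = 0 := by
  have h : QSeries 1 = 1 := by simpa [sigmaSeries_one] using sigmaSeries_mul_QSeries 1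
  simpa [QSeries, PowerSeries.coeff_one, hk] using congrArg (PowerSeries.coeff k) h

namespace Polynomial

variable {R : Type*} [CommRing R]

lemma eq_of_eval_natCast_succ_eq [IsDomain R] [CharZero R] {f g : R[X]}
    (h : ∀ n : ℕ, f.eval ((n : R) + 1) = g.eval ((n : R) + 1)) : f = g := by
  refine eq_of_infinite_eval_eq f g
    (Set.infinite_of_injective_forall_mem (f := fun n : ℕ => (n : R) + 1) ?_ h)
  intro a b hab
  exact_mod_cast add_right_cancel hab

lemma eq_zero_of_comp_X_add_one_eq_self [IsDomain R] [CharZero R] {f : R[X]}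
    (hf : f.comp (X + 1) = f) (h1 : f.eval 1 = 0) : f = 0 := by
  refine eq_of_eval_natCast_succ_eq fun n => ?_
  induction n with
  | zero => simpa using h1
  | succ n ih =>
    rw [← hf, eval_comp] at ih
    simpa using ih

lemma eq_of_shift_recursion [IsDomain R] [CharZero R] {f g : ℕ → R[X]}
    (hf : ∀ n, f (n + 1) = (f (n + 1)).comp (X + 1) + X * (f n).comp (X + 1))
    (hg : ∀ n, g (n + 1) = (g (n + 1)).comp (X + 1) + X * (g n).comp (X + 1))
    (h0 : f 0 = g 0) (h1 : ∀ n, (f (n + 1)).eval 1 = (g (n + 1)).eval 1) : f = g := by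
  funext n
  induction n with
  | zero => exact h0
  | succ n ih =>
    rw [← sub_eq_zero]
    refine eq_zero_of_comp_X_add_one_eq_self ?_ (by rw [eval_sub, h1, sub_self])
    have hfn := hf n
    rw [ih] at hfn
    rw [sub_comp]
    linear_combination hg n - hfn

lemma neg_one_pow_mul_comp_one_sub_X_succ {f : ℕ → R[X]}
    (hf : ∀ n, (f (n + 1)).comp (X + 1) = f (n + 1) + X * f n) (n : ℕ) :
    (-1) ^ (n + 1) * (f (n + 1)).comp (1 - X) =
      ((-1) ^ (n + 1) * (f (n + 1)).comp (1 - X)).comp (X + 1) +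
        X * ((-1) ^ n * (f n).comp (1 - X)).comp (X + 1) := by
  have hreflect : (X + 1 : R[X]).comp (-X) = 1 - X := by simp; ring
  have hshift : (1 - X : R[X]).comp (X + 1) = -X := by simp
  have h := congrArg (·.comp (-X)) (hf n)
  simp only [comp_assoc, hreflect, add_comp, mul_comp, X_comp] at h
  simp only [mul_comp, pow_comp, neg_comp, one_comp, comp_assoc, hshift]
  rw [h]
  ring

lemma degree_lt_of_degree_mul_lt [NoZeroDivisors R] {a q : R[X]} {d k : ℕ}
    (ha : a.degree = d) (h : (a * q).degree < (d + k : ℕ)) : q.degree < k := by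
  rw [degree_mul, ha, Nat.cast_add] at h
  exact (WithBot.add_lt_add_iff_left WithBot.coe_ne_bot).mp h

lemma comp_one_sub_X_comp_one_sub_X (f : R[X]) : (f.comp (1 - X)).comp (1 - X) = f := by
  simp [comp_assoc]

lemma natDegree_comp_one_sub_X [IsDomain R] (f : R[X]) :
    (f.comp (1 - X)).natDegree = f.natDegree := by
  rw [natDegree_comp, show (1 - X : R[X]).natDegree = 1 by compute_degree!, mul_one]

lemma exists_eq_C_add_mul_of_comp_one_sub_X_eq [IsDomain R] {g : R[X]}
    (hg : g.comp (1 - X) = g) :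
    ∃ q : R[X], g = C (g.eval 0) + X * (X - 1) * q ∧ q.comp (1 - X) = q := by
  -- `g(1) = g(0)` by invariance, so `g - g(0)` vanishes at `0` and at `1`.
  obtain ⟨h, hh⟩ := X_dvd_sub_C (p := g)
  have hroot : h.IsRoot 1 := by
    have hg1 := congrArg (eval 1) hg
    have hh1 := congrArg (eval 1) hh
    simp only [eval_comp, eval_sub, eval_one, eval_X, sub_self, eval_C, eval_mul, one_mul,
      coeff_zero_eq_eval_zero] at hg1 hh1
    rw [IsRoot, ← hh1, hg1, sub_self]
  obtain ⟨q, rfl⟩ := dvd_iff_isRoot.mpr hroot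
  have hu : (X * (X - 1) : R[X]).comp (1 - X) = X * (X - 1) := by simp; ring
  have hg' : g = C (g.eval 0) + X * (X - 1) * q := by
    rw [← coeff_zero_eq_eval_zero, ← sub_eq_iff_eq_add', hh, map_one, mul_assoc]
  refine ⟨q, hg', mul_left_cancel₀ (a := X * (X - 1)) ?_ ?_⟩
  · exact mul_ne_zero X_ne_zero (by simpa using X_sub_C_ne_zero (1 : R))
  · have h := congrArg (·.comp (1 - X)) hg'
    simp only [hg, add_comp, mul_comp, C_comp, hu] at h
    linear_combination hg' - h

lemma exists_sum_of_comp_one_sub_X_eq [IsDomain R] (K : ℕ) {g : R[X]}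
    (hg : g.comp (1 - X) = g) (hdeg : g.degree < (2 * K : ℕ)) :
    ∃ s : ℕ → R, g = ∑ i ∈ Finset.range K, C (s i) * (X * (X - 1)) ^ i := by
  induction K generalizing g with
  | zero => exact ⟨0, by simpa using hdeg⟩
  | succ K ih =>
    obtain ⟨q, hgq, hq⟩ := exists_eq_C_add_mul_of_comp_one_sub_X_eq hg
    have hqdeg : q.degree < (2 * K : ℕ) := by
      refine degree_lt_of_degree_mul_lt (a := X * (X - 1)) (d := 2) (by compute_degree!) ?_
      rw [eq_sub_of_add_eq' hgq.symm, add_comm 2]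
      exact (degree_sub_le _ _).trans_lt
        (max_lt hdeg (degree_C_le.trans_lt (by exact_mod_cast Nat.succ_pos _)))
    obtain ⟨s, hs⟩ := ih hq hqdeg
    refine ⟨fun i => if i = 0 then g.eval 0 else s (i - 1), ?_⟩
    conv_lhs => rw [hgq, hs, Finset.mul_sum]
    rw [Finset.sum_range_succ', add_comm]
    simp only [if_pos, pow_zero, mul_one, Nat.add_one_ne_zero, if_false, Nat.add_sub_cancel]
    congr 1
    exact Finset.sum_congr rfl fun i _ => by ring

lemma exists_mul_sum_of_comp_one_sub_X_eq_neg {F : Type*} [Field F] [NeZero (2 : F)] (K : ℕ)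
    {f : F[X]} (hf : f.comp (1 - X) = -f) (hdeg : f.degree < (2 * K + 1 : ℕ)) :
    ∃ s : ℕ → F, f = (2 * X - 1) * ∑ i ∈ Finset.range K, C (s i) * (X * (X - 1)) ^ i := by
  -- `1/2` is the fixed point of `X ↦ 1 - X`.
  have hroot : f.IsRoot 2⁻¹ := by
    have h := congrArg (eval 2⁻¹) hf
    have hhalf : (1 : F) - 2⁻¹ = 2⁻¹ := by rw [← one_div, sub_half]
    rw [eval_comp, eval_neg, eval_sub, eval_one, eval_X, hhalf] at h
    have h2 : (2 : F) * f.eval 2⁻¹ = 0 := by linear_combination h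
    exact (mul_eq_zero.mp h2).resolve_left two_ne_zero
  obtain ⟨q, hq⟩ := dvd_iff_isRoot.mpr hroot
  have hhalf : (2 : F[X]) * C 2⁻¹ = 1 := by
    rw [← C_ofNat, ← C_mul, mul_inv_cancel₀ two_ne_zero, C_1]
  have hfg : f = (2 * X - 1) * (C 2⁻¹ * q) := by linear_combination hq - X * q * hhalf
  have hlin : (2 * X - 1 : F[X]).degree = (1 : ℕ) := by compute_degree!; exact two_ne_zero
  have hlin0 : (2 * X - 1 : F[X]) ≠ 0 := fun h => by simp [h] at hlin
  have hsym : (C 2⁻¹ * q).comp (1 - X) = C 2⁻¹ * q := by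
    refine mul_left_cancel₀ hlin0 ?_
    have h := congrArg (·.comp (1 - X)) hfg
    have hanti : (2 * X - 1 : F[X]).comp (1 - X) = -(2 * X - 1) := by simp; ring
    rw [hf, mul_comp, hanti] at h
    linear_combination h + hfg
  obtain ⟨s, hs⟩ := exists_sum_of_comp_one_sub_X_eq K hsym
    (degree_lt_of_degree_mul_lt hlin (by rwa [← hfg, add_comm 1]))
  exact ⟨s, by rw [hfg, hs]⟩

end Polynomial

lemma pbinom_eq_C_mul_descPochhammer (m : ℕ) :
    pbinom m = C (m.factorial : ℚ)⁻¹ * descPochhammer ℚ m :=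
  Polynomial.funext fun x => by simp [pbinom, descPochhammer_eval_eq_prod_range, eval_prod]

lemma natDegree_pbinom_le (m : ℕ) : (pbinom m).natDegree ≤ m := by
  rw [pbinom_eq_C_mul_descPochhammer]
  exact (natDegree_C_mul_le _ _).trans (descPochhammer_natDegree ℚ m).le

lemma eval_natCast_pbinom (m k : ℕ) : (pbinom m).eval (k : ℚ) = k.choose m := by
  rw [pbinom_eq_C_mul_descPochhammer, eval_mul, eval_C, Nat.cast_choose_eq_descPochhammer_div,
    div_eq_inv_mul]

section Interpolation

variable {p r : ℕ → ℚ[X]}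
  (hpval : ∀ n j : ℕ, 1 ≤ j → (p n).eval (j : ℚ) = sigmaP n j)
  (hrval : ∀ n j : ℕ, 1 ≤ j → (r n).eval (j : ℚ) = QP j n)

include hpval in
lemma p_zero_eq_one : p 0 = 1 :=
  eq_of_eval_natCast_succ_eq fun k => by
    simpa [sigmaP_zero_left] using hpval 0 (k + 1) (by omega)

include hpval in
lemma p_succ_comp_X_add_one (n : ℕ) : (p (n + 1)).comp (X + 1) = p (n + 1) + X * p n :=
  eq_of_eval_natCast_succ_eq fun k => by
    have h := hpval (n + 1) (k + 1 + 1) (by omega)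
    have h' := hpval (n + 1) (k + 1) (by omega)
    have h'' := hpval n (k + 1) (by omega)
    push_cast at h h' h''
    simp [h, h', h'', sigmaP_succ_succ n (Nat.le_add_left 1 k)]

include hrval in
lemma r_zero_eq_one : r 0 = 1 :=
  eq_of_eval_natCast_succ_eq fun k => by
    simpa [QP] using hrval 0 (k + 1) (by omega)

include hrval in
lemma r_succ_eq (n : ℕ) : r (n + 1) = (r (n + 1)).comp (X + 1) + X * (r n).comp (X + 1) :=
  eq_of_eval_natCast_succ_eq fun k => by
    have h := hrval (n + 1) (k + 1 + 1) (by omega)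
    have h' := hrval n (k + 1 + 1) (by omega)
    have h'' := hrval (n + 1) (k + 1) (by omega)
    push_cast at h h' h''
    simp [h, h', h'', QP_succ (Nat.le_add_left 1 k)]

include hpval hrval in
lemma r_eq_neg_one_pow_mul_p_comp (n : ℕ) : r n = (-1) ^ n * (p n).comp (1 - X) := by
  have hrefl := neg_one_pow_mul_comp_one_sub_X_succ (p_succ_comp_X_add_one hpval)
  refine congrFun (eq_of_shift_recursion (g := fun n => (-1) ^ n * (p n).comp (1 - X))
    (r_succ_eq hrval) hrefl ?_ fun n => ?_) n
  · simp [r_zero_eq_one hrval, p_zero_eq_one hpval]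
  · have h0 := congrArg (eval 0) (hrefl n)
    have hp1 := hpval (n + 1) 1 le_rfl
    have hr1 := hrval (n + 1) 1 le_rfl
    simp [sigmaP_one_right, QP_one_left] at h0 hp1 hr1
    simp [hr1, ← h0, hp1]

include hpval hrval in
lemma eval_one_delta_eq_zero {N m : ℕ} (hNm : 2 * m ≤ N) (hne : (N, m) ≠ (2, 1)) :
    (pbinom m * r (N - 2 * m) - (-1) ^ N * (pbinom m).comp (1 - X) * p (N - 2 * m)).eval 1 =
      0 := by
  have hp := hpval (N - 2 * m) 1 le_rfl
  have hr := hrval (N - 2 * m) 1 le_rfl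
  have hB0 := eval_natCast_pbinom m 0
  have hB1 := eval_natCast_pbinom m 1
  push_cast at hp hr hB0 hB1
  simp only [eval_sub, eval_mul, eval_comp, eval_pow, eval_neg, eval_one, eval_X, sub_self, hp,
    hr, hB0, hB1]
  rcases eq_or_ne (N - 2 * m) 0 with hn | hn
  · obtain rfl : N = 2 * m := by omega
    have hm : m ≠ 1 := fun h => hne (by subst h; rfl)
    rw [hn, sigmaP_zero_left, QP, pow_mul, neg_one_sq, one_pow]
    rcases Nat.lt_or_ge m 2 with h | h
    · obtain rfl : m = 0 := by omega
      simp
    · simp [Nat.choose_eq_zero_of_lt (by omega : 1 < m),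
        Nat.choose_eq_zero_of_lt (by omega : 0 < m)]
  · simp [sigmaP_one_right hn, QP_one_left hn]

end Interpolation

theorem stmt11_general (p r : ℕ → Polynomial ℚ)
    (hpval : ∀ n : ℕ, ∀ j : ℕ, 1 ≤ j → (p n).eval (j : ℚ) = sigmaP n j)
    (hrdeg : ∀ n : ℕ, (r n).natDegree ≤ 2 * n)
    (hrval : ∀ n : ℕ, ∀ j : ℕ, 1 ≤ j → (r n).eval (j : ℚ) = QP j n)
    (N m : ℕ) (hNm : 2 * m ≤ N) :
    ∃ s : ℕ → ℚ,
      pbinom m * r (N - 2 * m) -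
          (-1) ^ N * (pbinom m).comp (1 - Polynomial.X) * p (N - 2 * m) =
        (2 * Polynomial.X - 1) *
          ∑ i ∈ Finset.range ((((2 * N : ℤ) - 3 * m - 1) / 2).toNat + 1),
            Polynomial.C (s i) * (Polynomial.X * (Polynomial.X - 1)) ^ i ∧
      ((N, m) ≠ (2, 1) → s 0 = 0) := by
  set n := N - 2 * m
  set F := pbinom m * r n with hF
  have hdelta :
      pbinom m * r n - (-1) ^ N * (pbinom m).comp (1 - X) * p n = F - F.comp (1 - X) := by
    have hsign : (-1 : ℚ[X]) ^ N = (-1) ^ n := by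
      rw [show N = n + 2 * m by omega, pow_add, pow_mul, neg_one_sq, one_pow, mul_one]
    rw [hF, mul_comp, r_eq_neg_one_pow_mul_p_comp hpval hrval n, mul_comp, pow_comp, neg_comp,
      one_comp, comp_one_sub_X_comp_one_sub_X, hsign]
    ring
  have hanti : (F - F.comp (1 - X)).comp (1 - X) = -(F - F.comp (1 - X)) := by
    rw [sub_comp, comp_one_sub_X_comp_one_sub_X]
    ring
  have hFdeg : F.natDegree ≤ m + 2 * n :=
    natDegree_mul_le.trans (add_le_add (natDegree_pbinom_le m) (hrdeg n))
  have hdeg : (F - F.comp (1 - X)).natDegree ≤ m + 2 * n :=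
    (natDegree_sub_le _ _).trans (max_le hFdeg (natDegree_comp_one_sub_X F ▸ hFdeg))
  set K := (((2 * N : ℤ) - 3 * m - 1) / 2).toNat with hK
  have hdegK : m + 2 * n < 2 * (K + 1) + 1 := by omega
  obtain ⟨s, hs⟩ := exists_mul_sum_of_comp_one_sub_X_eq_neg (K + 1) hanti
    ((degree_le_natDegree.trans (WithBot.coe_le_coe.mpr hdeg)).trans_lt
      (WithBot.coe_lt_coe.mpr hdegK))
  refine ⟨s, hdelta.trans hs, fun hne => ?_⟩
  have h1 := congrArg (eval 1) (hdelta.trans hs)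
  rw [eval_one_delta_eq_zero hpval hrval hNm hne] at h1
  norm_num [Finset.sum_range_succ', eval_finsetSum] at h1
  exact h1.symm

theorem stmt11 (p r : ℕ → Polynomial ℚ)
    (hpdeg : ∀ n : ℕ, (p n).natDegree ≤ 2 * n)
    (hpval : ∀ n : ℕ, ∀ j : ℕ, 1 ≤ j → (p n).eval (j : ℚ) = sigmaP n j)
    (hrdeg : ∀ n : ℕ, (r n).natDegree ≤ 2 * n)
    (hrval : ∀ n : ℕ, ∀ j : ℕ, 1 ≤ j → (r n).eval (j : ℚ) = QP j n)
    (N m : ℕ) (hNm : 2 * m ≤ N) (hN : 1 ≤ N) :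
    ∃ s : ℕ → ℚ,
      pbinom m * r (N - 2 * m) -
          (-1) ^ N * (pbinom m).comp (1 - Polynomial.X) * p (N - 2 * m) =
        (2 * Polynomial.X - 1) *
          ∑ i ∈ Finset.range ((((2 * N : ℤ) - 3 * m - 1) / 2).toNat + 1),
            Polynomial.C (s i) * (Polynomial.X * (Polynomial.X - 1)) ^ i ∧
      ((N, m) ≠ (2, 1) → s 0 = 0) :=
  stmt11_general p r hpval hrdeg hrval N m hNm
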